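/- Fix 1 ≤ l ≤ L-1 and α ∈ ℝ. For any data S, loss ℓ, and activation σ (each differentiable), if θ is a critical point of the empirical risk of NN({m_l}_{l=0}^L), i.e., ∇_θ R_S(θ) = 0, then T^α_{l,0}(θ) is a critical point of the empirical risk of the one-neuron-wider network, i.e., ∇_θ R_S(T^α_{l,0}(θ)) = 0. -/

import Mathlib

/-!
The widened network at `T^α_{l,0}(θ)` computes the same function as the original one at `θ`,
and this survives perturbation as long as the new neuron's outgoing weights vanish: the neuron is
then invisible, so perturbing an old coordinate changes the risk exactly as perturbing it in `θ`
does, and perturbing the new neuron's incoming weights or bias does not change it at all. The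
remaining coordinates are the outgoing weights `W^{[l+1]}_{i,new}`. As the incoming weights
vanish, the new neuron outputs the constant `σ(α)`, so perturbing `W^{[l+1]}_{i,new}` by `t` acts
as shifting the bias `b^{[l+1]}_i` by `σ(α) t`, a direction in which the original risk is
stationary.
-/

namespace EmbeddingPrinciple

/-- Parameters of a fully-connected NN: `(θ l).1 i j` is the weight `W^{[l+1]}_{ij}`
and `(θ l).2 i` is the bias `b^{[l+1]}_i` (the paper's layer `l` corresponds to index `l-1`).
Only the coordinates below the widths are meaningful for a concrete architecture. -/
abbrev NNParams : Type := ℕ → (ℕ → ℕ → ℝ) × (ℕ → ℝ)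

/-- Feature vectors `f^{[l]}` (entrywise activation `σ`); `m` is the width function. -/
noncomputable def feat (σ : ℝ → ℝ) (m : ℕ → ℕ) (θ : NNParams) (x : ℕ → ℝ) : ℕ → ℕ → ℝ
  | 0 => x
  | l + 1 => fun i =>
      σ ((∑ j ∈ Finset.range (m l), (θ l).1 i j * feat σ m θ x l j) + (θ l).2 i)

/-- Pre-activation of layer `l+1`: `W^{[l+1]} f^{[l]} + b^{[l+1]}`. -/
noncomputable def preact (σ : ℝ → ℝ) (m : ℕ → ℕ) (θ : NNParams) (x : ℕ → ℝ) (l i : ℕ) : ℝ :=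
  (∑ j ∈ Finset.range (m l), (θ l).1 i j * feat σ m θ x l j) + (θ l).2 i

/-- Output `f_θ` of the `(K+1)`-layer network (the paper's `L` is `K+1`). -/
noncomputable def nnOut (σ : ℝ → ℝ) (m : ℕ → ℕ) (K : ℕ) (θ : NNParams) (x : ℕ → ℝ) :
    ℕ → ℝ := fun i => preact σ m θ x K i

/-- Feature gradient `g^{[l+1]} = σ'(W^{[l+1]} f^{[l]} + b^{[l+1]})`. -/
noncomputable def gFeat (σ : ℝ → ℝ) (m : ℕ → ℕ) (θ : NNParams) (x : ℕ → ℝ) (l i : ℕ) : ℝ :=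
  deriv σ (preact σ m θ x l i)

/-- Output truncated to the valid output coordinates. -/
noncomputable def truncOut (σ : ℝ → ℝ) (m : ℕ → ℕ) (K : ℕ) (θ : NNParams) (x : ℕ → ℝ) :
    ℕ → ℝ := fun i => if i < m (K + 1) then nnOut σ m K θ x i else 0

/-- Empirical risk `R_S(θ) = (1/n) ∑ᵢ ℓ(f_θ(xᵢ), yᵢ)`. -/
noncomputable def risk (σ : ℝ → ℝ) (m : ℕ → ℕ) (K : ℕ)
    (loss : (ℕ → ℝ) → (ℕ → ℝ) → ℝ) {n : ℕ} (X Y : Fin n → ℕ → ℝ) (θ : NNParams) : ℝ :=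
  (n : ℝ)⁻¹ * ∑ a : Fin n, loss (truncOut σ m K θ (X a)) (Y a)

/-- Update a single weight coordinate. -/
def updW (θ : NNParams) (l i j : ℕ) (t : ℝ) : NNParams := fun l' =>
  if l' = l then ((fun i' j' => if i' = i ∧ j' = j then t else (θ l).1 i' j'), (θ l).2)
  else θ l'

/-- Update a single bias coordinate. -/
def updB (θ : NNParams) (l i : ℕ) (t : ℝ) : NNParams := fun l' =>
  if l' = l then ((θ l).1, fun i' => if i' = i then t else (θ l).2 i') else θ l'

/-- `θ` is a critical point of `R` : all partial derivatives with respect to the valid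
coordinates of the `(K+1)`-layer architecture with width function `m` vanish. -/
def IsCritical (R : NNParams → ℝ) (m : ℕ → ℕ) (K : ℕ) (θ : NNParams) : Prop :=
  (∀ l, l ≤ K → ∀ i, i < m (l + 1) → ∀ j, j < m l →
      deriv (fun t => R (updW θ l i j t)) ((θ l).1 i j) = 0) ∧
  (∀ l, l ≤ K → ∀ i, i < m (l + 1) →
      deriv (fun t => R (updB θ l i t)) ((θ l).2 i) = 0)

/-- Equality of two parameter tuples on all valid coordinates of the architecture. -/
def ParamEqOn (m : ℕ → ℕ) (K : ℕ) (θ₁ θ₂ : NNParams) : Prop :=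
  ∀ l, l ≤ K → ∀ i, i < m (l + 1) →
    (∀ j, j < m l → (θ₁ l).1 i j = (θ₂ l).1 i j) ∧ (θ₁ l).2 i = (θ₂ l).2 i

/-- Error vectors by reversed index: `errRev … t = z^{[K+1-t]}`, where `z^{[K+1]} = ∇ℓ`
(represented by the function `dloss`) and `z^{[l]} = (W^{[l+1]})ᵀ (z^{[l+1]} ∘ g^{[l+1]})`. -/
noncomputable def errRev (σ : ℝ → ℝ) (m : ℕ → ℕ) (K : ℕ) (θ : NNParams)
    (dloss : (ℕ → ℝ) → (ℕ → ℝ) → ℕ → ℝ) (x y : ℕ → ℝ) : ℕ → ℕ → ℝ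
  | 0 => dloss (truncOut σ m K θ x) y
  | t + 1 => fun j =>
      ∑ i ∈ Finset.range (m (K + 1 - t)),
        (θ (K - t)).1 i j *
          (errRev σ m K θ dloss x y t i * (if t = 0 then 1 else gFeat σ m θ x (K - t) i))

/-- `e^{[l]} = z^{[l]} ∘ g^{[l]}` (with `g^{[K+1]} = 1`). -/
noncomputable def errE (σ : ℝ → ℝ) (m : ℕ → ℕ) (K : ℕ) (θ : NNParams)
    (dloss : (ℕ → ℝ) → (ℕ → ℝ) → ℕ → ℝ) (x y : ℕ → ℝ) (l i : ℕ) : ℝ :=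
  errRev σ m K θ dloss x y (K + 1 - l) i *
    (if l = K + 1 then 1 else gFeat σ m θ x (l - 1) i)

/-- Differentiability of the loss in its first argument (on each finite-dimensional
coordinate block). -/
def LossDiff (loss : (ℕ → ℝ) → (ℕ → ℝ) → ℝ) : Prop :=
  ∀ (y : ℕ → ℝ) (d : ℕ),
    Differentiable ℝ (fun u : Fin d → ℝ => loss (fun i => if h : i < d then u ⟨i, h⟩ else 0) y)

/-- Widths after adding one neuron in the paper's layer `p+1`. -/
def widen (m : ℕ → ℕ) (p : ℕ) : ℕ → ℕ := fun l => if l = p + 1 then m (p + 1) + 1 else m l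

/-- One-step null embedding `T^α_{l,0}` at the paper's layer `l = p+1`. -/
def nullEmb (m : ℕ → ℕ) (p : ℕ) (α : ℝ) (θ : NNParams) : NNParams := fun l =>
  if l = p then
    ((fun i j => if i = m (p + 1) then 0 else (θ p).1 i j),
     (fun i => if i = m (p + 1) then α else (θ p).2 i))
  else if l = p + 1 then
    ((fun i j => if j = m (p + 1) then 0 else (θ (p + 1)).1 i j), (θ (p + 1)).2)
  else θ l

/-- One-step splitting embedding `T^α_{l,s}` at the paper's layer `l = p+1`,
splitting neuron `s`. -/
def splitEmb (m : ℕ → ℕ) (p s : ℕ) (α : ℝ) (θ : NNParams) : NNParams := fun l =>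
  if l = p then
    ((fun i j => if i = m (p + 1) then (θ p).1 s j else (θ p).1 i j),
     (fun i => if i = m (p + 1) then (θ p).2 s else (θ p).2 i))
  else if l = p + 1 then
    ((fun i j =>
        if j = s then (1 - α) * (θ (p + 1)).1 i s
        else if j = m (p + 1) then α * (θ (p + 1)).1 i s
        else (θ (p + 1)).1 i j),
     (θ (p + 1)).2)
  else θ l

open Finset

lemma widen_of_ne {m : ℕ → ℕ} {p l : ℕ} (h : l ≠ p + 1) : widen m p l = m l := if_neg h

lemma widen_succ (m : ℕ → ℕ) (p : ℕ) : widen m p (p + 1) = m (p + 1) + 1 := if_pos rfl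

lemma lt_widen_iff {m : ℕ → ℕ} {p l i : ℕ} :
    i < widen m p l ↔ i < m l ∨ l = p + 1 ∧ i = m (p + 1) := by
  unfold widen
  split_ifs with h
  · subst h; omega
  · simp [h]

lemma updW_fst_apply (θ : NNParams) (l i j : ℕ) (t : ℝ) (l' i' j' : ℕ) :
    (updW θ l i j t l').1 i' j' = if l' = l ∧ i' = i ∧ j' = j then t else (θ l').1 i' j' := by
  unfold updW
  by_cases hl : l' = l <;> simp [hl]

@[simp]
lemma updW_snd (θ : NNParams) (l i j : ℕ) (t : ℝ) (l' : ℕ) : (updW θ l i j t l').2 = (θ l').2 := by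
  unfold updW
  split_ifs with hl
  · rw [hl]
  · rfl

@[simp]
lemma updB_fst (θ : NNParams) (l i : ℕ) (t : ℝ) (l' : ℕ) : (updB θ l i t l').1 = (θ l').1 := by
  unfold updB
  split_ifs with hl
  · rw [hl]
  · rfl

lemma updB_snd_apply (θ : NNParams) (l i : ℕ) (t : ℝ) (l' i' : ℕ) :
    (updB θ l i t l').2 i' = if l' = l ∧ i' = i then t else (θ l').2 i' := by
  unfold updB
  by_cases hl : l' = l <;> simp [hl]

@[simp]
lemma nullEmb_fst_new (m : ℕ → ℕ) (p : ℕ) (α : ℝ) (θ : NNParams) (j : ℕ) :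
    (nullEmb m p α θ p).1 (m (p + 1)) j = 0 := by
  simp [nullEmb]

@[simp]
lemma nullEmb_snd_new (m : ℕ → ℕ) (p : ℕ) (α : ℝ) (θ : NNParams) :
    (nullEmb m p α θ p).2 (m (p + 1)) = α := by
  simp [nullEmb]

@[simp]
lemma nullEmb_succ_fst_new (m : ℕ → ℕ) (p : ℕ) (α : ℝ) (θ : NNParams) (i : ℕ) :
    (nullEmb m p α θ (p + 1)).1 i (m (p + 1)) = 0 := by
  simp [nullEmb]

@[simp]
lemma nullEmb_succ_snd (m : ℕ → ℕ) (p : ℕ) (α : ℝ) (θ : NNParams) :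
    (nullEmb m p α θ (p + 1)).2 = (θ (p + 1)).2 := by
  simp [nullEmb]

lemma feat_succ_of_weight_eq_zero (σ : ℝ → ℝ) (m : ℕ → ℕ) {θ : NNParams} {l i : ℕ}
    (h : ∀ j, (θ l).1 i j = 0) (x : ℕ → ℝ) : feat σ m θ x (l + 1) i = σ ((θ l).2 i) := by
  simp [feat, h]

/-- `θ'` (widened at layer `p + 1`) computes the same network function as `θ`: the new
neuron's contribution to each pre-activation of the next layer is absorbed by the bias of `θ`. -/
structure IsWideningOf (σ : ℝ → ℝ) (m : ℕ → ℕ) (K p : ℕ) (θ' θ : NNParams) : Prop where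
  weight_eq : ∀ l ≤ K, ∀ i < m (l + 1), ∀ j < m l, (θ' l).1 i j = (θ l).1 i j
  bias_eq : ∀ l ≤ K, l ≠ p + 1 → ∀ i < m (l + 1), (θ' l).2 i = (θ l).2 i
  bias_absorb : ∀ x, ∀ i < m (p + 2),
    (θ' (p + 1)).1 i (m (p + 1)) * feat σ (widen m p) θ' x (p + 1) (m (p + 1)) +
      (θ' (p + 1)).2 i = (θ (p + 1)).2 i

namespace IsWideningOf

variable {σ : ℝ → ℝ} {m : ℕ → ℕ} {K p : ℕ} {θ' θ : NNParams}

lemma preact_eq (h : IsWideningOf σ m K p θ' θ) {x : ℕ → ℝ} {l i : ℕ} (hl : l ≤ K)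
    (hi : i < m (l + 1))
    (hfeat : ∀ j < m l, feat σ (widen m p) θ' x l j = feat σ m θ x l j) :
    preact σ (widen m p) θ' x l i = preact σ m θ x l i := by
  have hsum : ∑ j ∈ range (m l), (θ' l).1 i j * feat σ (widen m p) θ' x l j =
      ∑ j ∈ range (m l), (θ l).1 i j * feat σ m θ x l j :=
    sum_congr rfl fun j hj => by
      rw [h.weight_eq l hl i hi j (mem_range.1 hj), hfeat j (mem_range.1 hj)]
  unfold preact
  by_cases hlp : l = p + 1
  · subst hlp
    rw [widen_succ, sum_range_succ, add_assoc, h.bias_absorb x i hi, hsum]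
  · rw [widen_of_ne hlp, hsum, h.bias_eq l hl hlp i hi]

lemma feat_eq (h : IsWideningOf σ m K p θ' θ) (x : ℕ → ℝ) :
    ∀ l ≤ K, ∀ i < m l, feat σ (widen m p) θ' x l i = feat σ m θ x l i
  | 0, _, _, _ => rfl
  | l + 1, hl, _, hi => congrArg σ (h.preact_eq (by omega) hi (h.feat_eq x l (by omega)))

lemma risk_eq (h : IsWideningOf σ m K p θ' θ) (hp : p < K)
    (loss : (ℕ → ℝ) → (ℕ → ℝ) → ℝ) {n : ℕ} (X Y : Fin n → ℕ → ℝ) :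
    risk σ (widen m p) K loss X Y θ' = risk σ m K loss X Y θ := by
  have hout (x : ℕ → ℝ) : truncOut σ (widen m p) K θ' x = truncOut σ m K θ x := by
    funext i
    simp only [truncOut, nnOut, widen_of_ne (show K + 1 ≠ p + 1 by omega)]
    split_ifs with hi
    · exact h.preact_eq le_rfl hi (h.feat_eq x K le_rfl)
    · rfl
  simp only [risk, hout]

end IsWideningOf

lemma deriv_risk_eq_of_isWideningOf {σ : ℝ → ℝ} {m : ℕ → ℕ} {K p : ℕ} (hp : p < K)
    {γ' γ : ℝ → NNParams} (h : ∀ t, IsWideningOf σ m K p (γ' t) (γ t))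
    (loss : (ℕ → ℝ) → (ℕ → ℝ) → ℝ) {n : ℕ} (X Y : Fin n → ℕ → ℝ) (s : ℝ) :
    deriv (fun t => risk σ (widen m p) K loss X Y (γ' t)) s =
      deriv (fun t => risk σ m K loss X Y (γ t)) s :=
  congrArg (deriv · s) (funext fun t => (h t).risk_eq hp loss X Y)

lemma isWideningOf_of_paramEqOn {σ : ℝ → ℝ} {m : ℕ → ℕ} {K p : ℕ} {θ' θ : NNParams}
    (hp : p < K) (h : ParamEqOn m K θ' θ) (hcol : ∀ i, (θ' (p + 1)).1 i (m (p + 1)) = 0) :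
    IsWideningOf σ m K p θ' θ where
  weight_eq l hl i hi := (h l hl i hi).1
  bias_eq l hl _ i hi := (h l hl i hi).2
  bias_absorb x i hi := by rw [hcol, zero_mul, zero_add, (h (p + 1) hp i hi).2]

section ParamEqOn

variable {m : ℕ → ℕ} {K : ℕ} {θ₁ θ₂ θ₃ : NNParams}

lemma ParamEqOn.trans (h₁₂ : ParamEqOn m K θ₁ θ₂) (h₂₃ : ParamEqOn m K θ₂ θ₃) :
    ParamEqOn m K θ₁ θ₃ := fun l hl i hi =>
  ⟨fun j hj => ((h₁₂ l hl i hi).1 j hj).trans ((h₂₃ l hl i hi).1 j hj),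
    (h₁₂ l hl i hi).2.trans (h₂₃ l hl i hi).2⟩

lemma ParamEqOn.updW (h : ParamEqOn m K θ₁ θ₂) (l i j : ℕ) (t : ℝ) :
    ParamEqOn m K (updW θ₁ l i j t) (updW θ₂ l i j t) := fun l' hl' i' hi' =>
  ⟨fun j' hj' => by rw [updW_fst_apply, updW_fst_apply, (h l' hl' i' hi').1 j' hj'],
    by rw [updW_snd, updW_snd, (h l' hl' i' hi').2]⟩

lemma ParamEqOn.updB (h : ParamEqOn m K θ₁ θ₂) (l i : ℕ) (t : ℝ) :
    ParamEqOn m K (updB θ₁ l i t) (updB θ₂ l i t) := fun l' hl' i' hi' =>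
  ⟨fun j' hj' => by rw [updB_fst, updB_fst, (h l' hl' i' hi').1 j' hj'],
    by rw [updB_snd_apply, updB_snd_apply, (h l' hl' i' hi').2]⟩

lemma paramEqOn_updW_of_le {l i : ℕ} (hi : m (l + 1) ≤ i) (θ : NNParams) (j : ℕ) (t : ℝ) :
    ParamEqOn m K (updW θ l i j t) θ := fun l' _ i' hi' =>
  ⟨fun j' _ => by rw [updW_fst_apply, if_neg (by rintro ⟨rfl, rfl, -⟩; omega)],
    by rw [updW_snd]⟩

lemma paramEqOn_updB_of_le {l i : ℕ} (hi : m (l + 1) ≤ i) (θ : NNParams) (t : ℝ) :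
    ParamEqOn m K (updB θ l i t) θ := fun l' _ i' hi' =>
  ⟨fun j' _ => by rw [updB_fst],
    by rw [updB_snd_apply, if_neg (by rintro ⟨rfl, rfl⟩; omega)]⟩

lemma paramEqOn_nullEmb (p : ℕ) (α : ℝ) (θ : NNParams) : ParamEqOn m K (nullEmb m p α θ) θ := by
  intro l _ i hi
  by_cases hlp : l = p
  · subst hlp
    simp [nullEmb, hi.ne]
  · by_cases hlq : l = p + 1
    · subst hlq
      simp +contextual [nullEmb, Nat.ne_of_lt]
    · simp [nullEmb, hlp, hlq]

end ParamEqOn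

section NullEmbedding

variable {σ : ℝ → ℝ} {m : ℕ → ℕ} {K p : ℕ} (α : ℝ) (θ : NNParams)
  (loss : (ℕ → ℝ) → (ℕ → ℝ) → ℝ) {n : ℕ} (X Y : Fin n → ℕ → ℝ)

lemma deriv_risk_updW_nullEmb_of_lt (hp : p < K) {l i j : ℕ} (hl : l ≤ K)
    (hi : i < m (l + 1)) (hj : j < m l) :
    deriv (fun t => risk σ (widen m p) K loss X Y (updW (nullEmb m p α θ) l i j t))
        ((nullEmb m p α θ l).1 i j) =
      deriv (fun t => risk σ m K loss X Y (updW θ l i j t)) ((θ l).1 i j) := by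
  have hcol (t : ℝ) (i' : ℕ) : (updW (nullEmb m p α θ) l i j t (p + 1)).1 i' (m (p + 1)) = 0 := by
    rw [updW_fst_apply, if_neg (by rintro ⟨rfl, -, rfl⟩; exact lt_irrefl _ hj),
      nullEmb_succ_fst_new]
  rw [deriv_risk_eq_of_isWideningOf hp (fun t => isWideningOf_of_paramEqOn hp
      ((paramEqOn_nullEmb p α θ).updW l i j t) (hcol t)),
    ((paramEqOn_nullEmb p α θ) l hl i hi).1 j hj]

lemma deriv_risk_updB_nullEmb_of_lt (hp : p < K) {l i : ℕ} (hl : l ≤ K) (hi : i < m (l + 1)) :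
    deriv (fun t => risk σ (widen m p) K loss X Y (updB (nullEmb m p α θ) l i t))
        ((nullEmb m p α θ l).2 i) =
      deriv (fun t => risk σ m K loss X Y (updB θ l i t)) ((θ l).2 i) := by
  have hcol (t : ℝ) (i' : ℕ) : (updB (nullEmb m p α θ) l i t (p + 1)).1 i' (m (p + 1)) = 0 := by
    simp
  rw [deriv_risk_eq_of_isWideningOf hp (fun t => isWideningOf_of_paramEqOn hp
      ((paramEqOn_nullEmb p α θ).updB l i t) (hcol t)),
    ((paramEqOn_nullEmb p α θ) l hl i hi).2]

lemma deriv_risk_updW_nullEmb_new_row (hp : p < K) (j : ℕ) (s : ℝ) :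
    deriv (fun t => risk σ (widen m p) K loss X Y (updW (nullEmb m p α θ) p (m (p + 1)) j t))
      s = 0 := by
  have hcol (t : ℝ) (i' : ℕ) :
      (updW (nullEmb m p α θ) p (m (p + 1)) j t (p + 1)).1 i' (m (p + 1)) = 0 := by
    simp [updW_fst_apply]
  rw [deriv_risk_eq_of_isWideningOf hp (γ := fun _ => θ) (fun t => isWideningOf_of_paramEqOn hp
      ((paramEqOn_updW_of_le le_rfl _ j t).trans (paramEqOn_nullEmb p α θ)) (hcol t))]
  exact deriv_const s _

lemma deriv_risk_updB_nullEmb_new (hp : p < K) (s : ℝ) :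
    deriv (fun t => risk σ (widen m p) K loss X Y (updB (nullEmb m p α θ) p (m (p + 1)) t))
      s = 0 := by
  have hcol (t : ℝ) (i' : ℕ) :
      (updB (nullEmb m p α θ) p (m (p + 1)) t (p + 1)).1 i' (m (p + 1)) = 0 := by
    simp
  rw [deriv_risk_eq_of_isWideningOf hp (γ := fun _ => θ) (fun t => isWideningOf_of_paramEqOn hp
      ((paramEqOn_updB_of_le le_rfl _ t).trans (paramEqOn_nullEmb p α θ)) (hcol t))]
  exact deriv_const s _

lemma deriv_risk_updW_nullEmb_new_col (hp : p < K) (i : ℕ) :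
    deriv (fun t => risk σ (widen m p) K loss X Y (updW (nullEmb m p α θ) (p + 1) i (m (p + 1)) t))
        ((nullEmb m p α θ (p + 1)).1 i (m (p + 1))) =
      σ α * deriv (fun b => risk σ m K loss X Y (updB θ (p + 1) i b)) ((θ (p + 1)).2 i) := by
  set b := (θ (p + 1)).2 i
  have hW (t : ℝ) : IsWideningOf σ m K p (updW (nullEmb m p α θ) (p + 1) i (m (p + 1)) t)
      (updB θ (p + 1) i (b + σ α * t)) := by
    refine ⟨fun l hl i' hi' j hj => ?_, fun l hl hlp i' hi' => ?_, fun x i' _ => ?_⟩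
    · rw [updW_fst_apply, if_neg (by rintro ⟨rfl, -, rfl⟩; exact lt_irrefl _ hj), updB_fst]
      exact ((paramEqOn_nullEmb p α θ) l hl i' hi').1 j hj
    · rw [updW_snd, updB_snd_apply, if_neg (by tauto)]
      exact ((paramEqOn_nullEmb p α θ) l hl i' hi').2
    · rw [feat_succ_of_weight_eq_zero σ _ (fun j => by simp [updW_fst_apply]) x]
      by_cases h : i' = i <;> simp [updW_fst_apply, updB_snd_apply, h, b]
      ring
  rw [nullEmb_succ_fst_new, deriv_risk_eq_of_isWideningOf hp hW,
    deriv_comp_mul_left (σ α) (fun u => risk σ m K loss X Y (updB θ (p + 1) i (b + u))),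
    mul_zero, deriv_comp_const_add (fun u => risk σ m K loss X Y (updB θ (p + 1) i u)) b 0,
    add_zero, smul_eq_mul]

end NullEmbedding

theorem one_step_null_embedding_criticality_general
    (K : ℕ) (m : ℕ → ℕ) (p : ℕ) (hp : p < K) (α : ℝ)
    (σ : ℝ → ℝ)
    (loss : (ℕ → ℝ) → (ℕ → ℝ) → ℝ)
    (n : ℕ) (X Y : Fin n → ℕ → ℝ) (θ : NNParams)
    (hcrit : IsCritical (risk σ m K loss X Y) m K θ) :
    IsCritical (risk σ (widen m p) K loss X Y) (widen m p) K (nullEmb m p α θ) := by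
  obtain ⟨hW, hB⟩ := hcrit
  refine ⟨fun l hl i hi j hj => ?_, fun l hl i hi => ?_⟩
  · rw [lt_widen_iff] at hi hj
    rcases hj with hj | ⟨rfl, rfl⟩
    · rcases hi with hi | ⟨hl1, rfl⟩
      · rw [deriv_risk_updW_nullEmb_of_lt α θ loss X Y hp hl hi hj]
        exact hW l hl i hi j hj
      · obtain rfl : l = p := by omega
        exact deriv_risk_updW_nullEmb_new_row α θ loss X Y hp j _
    · rcases hi with hi | ⟨hl1, -⟩
      · rw [deriv_risk_updW_nullEmb_new_col α θ loss X Y hp i, hB (p + 1) hl i hi, mul_zero]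
      · omega
  · rw [lt_widen_iff] at hi
    rcases hi with hi | ⟨hl1, rfl⟩
    · rw [deriv_risk_updB_nullEmb_of_lt α θ loss X Y hp hl hi]
      exact hB l hl i hi
    · obtain rfl : l = p := by omega
      exact deriv_risk_updB_nullEmb_new α θ loss X Y hp _

/-- the one-step null embedding preserves criticality of the empirical risk. -/
theorem one_step_null_embedding_criticality
    (K : ℕ) (hK : 1 ≤ K) (m : ℕ → ℕ) (p : ℕ) (hp : p < K) (α : ℝ)
    (σ : ℝ → ℝ) (hσ : Differentiable ℝ σ)
    (loss : (ℕ → ℝ) → (ℕ → ℝ) → ℝ) (hloss : LossDiff loss)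
    (n : ℕ) (X Y : Fin n → ℕ → ℝ) (θ : NNParams)
    (hcrit : IsCritical (risk σ m K loss X Y) m K θ) :
    IsCritical (risk σ (widen m p) K loss X Y) (widen m p) K (nullEmb m p α θ) :=
  one_step_null_embedding_criticality_general K m p hp α σ loss n X Y θ hcrit

end EmbeddingPrinciple
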